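/- arXiv:2410.03910 — 5 statements merged into one kernel-verified Lean document; each statement's English description precedes it below -/
import Mathlib

section
/- With the (f,p)-Wasserstein divergence D as defined, if f(x) > 0 for all x > 0, then D(A‖B) = 0 if and only if A = B (as multisets of off-diagonal points). -/
open Multiset
open scoped ENNReal

attribute [local instance] Classical.propDecidable

noncomputable section

/-- A point of an (extended) persistence diagram: finite birth, possibly infinite death. -/
abbrev Pt : Type := ℝ × EReal

/-- A persistence diagram: a finite multiset of points strictly above the diagonal
(the diagonal itself, with infinite multiplicity, is treated implicitly). -/
def IsPD (A : Multiset Pt) : Prop := ∀ a ∈ A, (a.1 : EReal) < a.2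

/-- Sup-norm distance between two diagram points, with the convention that two
infinite death coordinates are at distance zero from each other. -/
def dInfty (a b : Pt) : ℝ≥0∞ :=
  max (ENNReal.ofReal |a.1 - b.1|)
    (if a.2 = ⊤ ∧ b.2 = ⊤ then 0 else (a.2 - b.2).abs)

/-- Sup-norm distance from a point to its diagonal projection
`λ(x,y) = ((x+y)/2,(x+y)/2)`; it is `∞` for points with infinite death. -/
def dDiag (a : Pt) : ℝ≥0∞ :=
  if a.2 = ⊤ then ⊤ else (a.2 - (a.1 : EReal)).abs / 2

/-- A point lying on the diagonal. -/
def isDiag (a : Pt) : Prop := a.2 = (a.1 : EReal)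

/-- `M` encodes an injection from the diagram `A` into the diagram `B` augmented with
all diagonal points: every point of `A` is matched (to an off-diagonal point of `B`,
with multiplicity, or to a diagonal point). -/
def IsInjMatching (A B : Multiset Pt) (M : Multiset (Pt × Pt)) : Prop :=
  M.map Prod.fst = A ∧ (M.map Prod.snd).filter (fun b => ¬ isDiag b) ≤ B

/-- The points of `B` not in the image of the injection encoded by `M`. -/
def unmatched (B : Multiset Pt) (M : Multiset (Pt × Pt)) : Multiset Pt :=
  B - (M.map Prod.snd).filter (fun b => ¬ isDiag b)

/-- The cost of an injection: matched pairs contribute `‖a-γ(a)‖_∞^p`, unmatched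
points of `B` contribute `f(‖b-λ(b)‖_∞)^p`. -/
def injCost (f : ℝ≥0∞ → ℝ≥0∞) (p : ℝ) (B : Multiset Pt) (M : Multiset (Pt × Pt)) : ℝ≥0∞ :=
  (M.map fun q => dInfty q.1 q.2 ^ p).sum +
    ((unmatched B M).map fun b => f (dDiag b) ^ p).sum

/-- The `(f,p)`-Wasserstein divergence `D_p^f(A‖B)`. -/
def WDiv (f : ℝ≥0∞ → ℝ≥0∞) (p : ℝ) (A B : Multiset Pt) : ℝ≥0∞ :=
  (⨅ (M : Multiset (Pt × Pt)) (_ : IsInjMatching A B M), injCost f p B M) ^ (1 / p)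

/-- The `(f,∞)`-bottleneck divergence `D_∞^f(A‖B)`. -/
def WDivInf (f : ℝ≥0∞ → ℝ≥0∞) (A B : Multiset Pt) : ℝ≥0∞ :=
  ⨅ (M : Multiset (Pt × Pt)) (_ : IsInjMatching A B M),
    max ((M.map fun q => dInfty q.1 q.2).sup)
      (((unmatched B M).map fun b => f (dDiag b)).sup)

/-- `M` encodes a bijection between `A` and `B`, both augmented with all diagonal
points: the off-diagonal sources are exactly `A` and the off-diagonal targets are
exactly `B`. -/
def IsBijMatching (A B : Multiset Pt) (M : Multiset (Pt × Pt)) : Prop :=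
  (M.map Prod.fst).filter (fun a => ¬ isDiag a) = A ∧
    (M.map Prod.snd).filter (fun b => ¬ isDiag b) = B

/-- The `p`-Wasserstein distance `d_p(A,B)`. -/
def Wass (p : ℝ) (A B : Multiset Pt) : ℝ≥0∞ :=
  (⨅ (M : Multiset (Pt × Pt)) (_ : IsBijMatching A B M),
    (M.map fun q => dInfty q.1 q.2 ^ p).sum) ^ (1 / p)

/-- The bottleneck distance `d_∞(A,B)`. -/
def WassInf (A B : Multiset Pt) : ℝ≥0∞ :=
  ⨅ (M : Multiset (Pt × Pt)) (_ : IsBijMatching A B M),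
    (M.map fun q => dInfty q.1 q.2).sup

/-- `f` is sub-diagonal: `f x ≤ x`. -/
def SubDiag (f : ℝ≥0∞ → ℝ≥0∞) : Prop := ∀ x, f x ≤ x

/-- `f` is sub-additive: `f (x+y) ≤ f x + f y`. -/
def SubAdd (f : ℝ≥0∞ → ℝ≥0∞) : Prop := ∀ x y, f (x + y) ≤ f x + f y

/-- The projection `π_F` deleting the points with infinite death coordinate. -/
def piF (A : Multiset Pt) : Multiset Pt := A.filter (fun a => a.2 ≠ ⊤)

end

/-!
A matching of `A` into `B` that is not the identity must pay for a mistake: send some `a ∈ A`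
to the diagonal (cost at least `dDiag a ^ p`), send it to some `b ∈ B` with `b ≠ a`
(cost `dInfty a b ^ p`), or leave some `b ∈ B` unmatched (cost `F (dDiag b) ^ p`). These are
finitely many positive numbers depending only on `A` and `B`, so the infimum defining
`WDiv F p A B` is positive unless `A = B`; conversely the identity matching costs nothing.
-/

-- No finiteness hypotheses are needed since `⊤ - ⊤ = ⊥ - ⊥ = ⊥` in `EReal`.
lemma EReal.eq_of_sub_eq_zero {x y : EReal} (h : x - y = 0) : x = y := by
  induction x using EReal.rec <;> induction y using EReal.rec <;>
    simp_all [← EReal.coe_sub, sub_eq_zero]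

lemma Finset.exists_pos_forall_le {ι : Type*} (s : Finset ι) (g : ι → ℝ≥0∞)
    (hg : ∀ i ∈ s, 0 < g i) : ∃ ε > 0, ∀ i ∈ s, ε ≤ g i :=
  ⟨s.inf g, (Finset.lt_inf_iff ENNReal.zero_lt_top).2 hg, fun _ hi => Finset.inf_le hi⟩

lemma dInfty_self {a : Pt} (h : a.2 ≠ ⊥) : dInfty a a = 0 := by
  by_cases htop : a.2 = ⊤ <;> simp [dInfty, htop, EReal.sub_self, h]

lemma eq_of_dInfty_eq_zero {a b : Pt} (h : dInfty a b = 0) : a = b := by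
  rw [dInfty, max_eq_zero] at h
  obtain ⟨h₁, h₂⟩ := h
  refine Prod.ext ?_ ?_
  · simpa [sub_eq_zero] using h₁
  · split_ifs at h₂ with htop
    · exact htop.1.trans htop.2.symm
    · exact EReal.eq_of_sub_eq_zero (EReal.abs_eq_zero_iff.1 h₂)

lemma dDiag_pos {a : Pt} (h : (a.1 : EReal) < a.2) : 0 < dDiag a := by
  unfold dDiag
  split_ifs
  · exact ENNReal.zero_lt_top
  · refine ENNReal.div_pos (fun h0 => h.ne' ?_) ENNReal.ofNat_ne_top
    exact EReal.eq_of_sub_eq_zero (EReal.abs_eq_zero_iff.1 h0)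

lemma dDiag_le_dInfty_of_isDiag (a : Pt) {d : Pt} (hd : isDiag d) : dDiag a ≤ dInfty a d := by
  obtain ⟨x, y⟩ := a
  obtain ⟨t, _⟩ := d
  simp only [isDiag] at hd
  subst hd
  induction y using EReal.rec with
  | bot => simp [dDiag, dInfty]
  | top => simp [dDiag, dInfty]
  | coe y =>
    have key : |y - x| / 2 ≤ max |x - t| |y - t| := by
      have := abs_sub_le y t x
      rw [abs_sub_comm t x] at this
      linarith [le_max_left |x - t| |y - t|, le_max_right |x - t| |y - t|]
    simp only [dDiag, dInfty, ← EReal.coe_sub, EReal.abs_def, EReal.coe_ne_top,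
      and_false, if_false, ← ENNReal.ofReal_max]
    calc ENNReal.ofReal |y - x| / 2 = ENNReal.ofReal (|y - x| / 2) := by
          rw [ENNReal.ofReal_div_of_pos two_pos, ENNReal.ofReal_ofNat]
      _ ≤ _ := ENNReal.ofReal_le_ofReal key

lemma IsPD.filter_not_isDiag {A : Multiset Pt} (hA : IsPD A) :
    A.filter (fun b => ¬ isDiag b) = A :=
  Multiset.filter_eq_self.2 fun a ha hd => (hA a ha).ne hd.symm

section Matchings

variable {F : ℝ≥0∞ → ℝ≥0∞} {p : ℝ} {A B : Multiset Pt} {M : Multiset (Pt × Pt)}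

lemma pow_dInfty_le_injCost {q : Pt × Pt} (hq : q ∈ M) :
    dInfty q.1 q.2 ^ p ≤ injCost F p B M :=
  (Multiset.le_sum_of_mem (mem_map_of_mem (fun q : Pt × Pt => dInfty q.1 q.2 ^ p) hq)).trans
    le_self_add

lemma pow_dDiag_le_injCost {b : Pt} (hb : b ∈ unmatched B M) :
    F (dDiag b) ^ p ≤ injCost F p B M :=
  (Multiset.le_sum_of_mem (Multiset.mem_map_of_mem (fun b => F (dDiag b) ^ p) hb)).trans
    le_add_self

lemma isInjMatching_map_diag (A : Multiset Pt) : IsInjMatching A A (A.map fun a => (a, a)) := by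
  simp [IsInjMatching, Multiset.map_map, Multiset.filter_le]

lemma injCost_map_diag (hp : 0 < p) (hA : IsPD A) :
    injCost F p A (A.map fun a => (a, a)) = 0 := by
  have hdInfty : ∀ a ∈ A, dInfty a a ^ p = 0 := fun a ha => by
    rw [dInfty_self (ne_bot_of_gt (hA a ha)), ENNReal.zero_rpow_of_pos hp]
  simp only [injCost, unmatched, Multiset.map_map, Function.comp_def, Multiset.map_id',
    hA.filter_not_isDiag, tsub_self, Multiset.map_zero, Multiset.sum_zero, add_zero]
  exact Multiset.sum_eq_zero fun x hx => by
    obtain ⟨a, ha, rfl⟩ := Multiset.mem_map.1 hx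
    exact hdInfty a ha

lemma IsInjMatching.le_of_forall_fst_eq_snd (hM : IsInjMatching A B M) (hA : IsPD A)
    (h : ∀ q ∈ M, q.1 = q.2) : A ≤ B ∧ unmatched B M = B - A := by
  have hsnd : M.map Prod.snd = A := hM.1 ▸ Multiset.map_congr rfl fun q hq => (h q hq).symm
  have hle := hM.2
  rw [hsnd, hA.filter_not_isDiag] at hle
  exact ⟨hle, by rw [unmatched, hsnd, hA.filter_not_isDiag]⟩

lemma exists_pos_le_injCost (hp : 0 < p) (hF : ∀ x, 0 < x → 0 < F x) (hA : IsPD A) (hB : IsPD B)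
    (hAB : A ≠ B) : ∃ ε > 0, ∀ M, IsInjMatching A B M → ε ≤ injCost F p B M := by
  obtain ⟨εA, hεA, hA_le⟩ := A.toFinset.exists_pos_forall_le (fun a => dDiag a ^ p)
    fun a ha => ENNReal.rpow_pos_of_nonneg (dDiag_pos (hA a (Multiset.mem_toFinset.1 ha))) hp.le
  obtain ⟨εB, hεB, hB_le⟩ := B.toFinset.exists_pos_forall_le (fun b => F (dDiag b) ^ p)
    fun b hb => ENNReal.rpow_pos_of_nonneg (hF _ (dDiag_pos (hB b (mem_toFinset.1 hb)))) hp.le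
  obtain ⟨εAB, hεAB, hAB_le⟩ := ((A.toFinset ×ˢ B.toFinset).filter fun q => q.1 ≠ q.2)
    |>.exists_pos_forall_le (fun q => dInfty q.1 q.2 ^ p) fun q hq =>
      ENNReal.rpow_pos_of_nonneg (pos_iff_ne_zero.2 fun h0 =>
        (Finset.mem_filter.1 hq).2 (eq_of_dInfty_eq_zero h0)) hp.le
  refine ⟨min εA (min εB εAB), lt_min hεA (lt_min hεB hεAB), fun M hM => ?_⟩
  by_cases hid : ∀ q ∈ M, q.1 = q.2
  · obtain ⟨hle, hun⟩ := hM.le_of_forall_fst_eq_snd hA hid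
    obtain ⟨b, hb⟩ := Multiset.exists_mem_of_ne_zero fun h0 =>
      hAB (le_antisymm hle (tsub_eq_zero_iff_le.1 h0))
    have hbB : b ∈ B := Multiset.mem_of_le (Multiset.sub_le_self _ _) hb
    calc min εA (min εB εAB) ≤ εB := (min_le_right _ _).trans (min_le_left _ _)
      _ ≤ F (dDiag b) ^ p := hB_le b (Multiset.mem_toFinset.2 hbB)
      _ ≤ injCost F p B M := pow_dDiag_le_injCost (hun ▸ hb)
  push Not at hid
  obtain ⟨q, hq, hne⟩ := hid
  have hqA : q.1 ∈ A := hM.1 ▸ Multiset.mem_map_of_mem _ hq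
  by_cases hd : isDiag q.2
  · calc min εA (min εB εAB) ≤ εA := min_le_left _ _
      _ ≤ dDiag q.1 ^ p := hA_le q.1 (Multiset.mem_toFinset.2 hqA)
      _ ≤ dInfty q.1 q.2 ^ p := ENNReal.rpow_le_rpow (dDiag_le_dInfty_of_isDiag _ hd) hp.le
      _ ≤ injCost F p B M := pow_dInfty_le_injCost hq
  · have hqB : q.2 ∈ B :=
      Multiset.mem_of_le hM.2 (Multiset.mem_filter.2 ⟨Multiset.mem_map_of_mem _ hq, hd⟩)
    calc min εA (min εB εAB) ≤ εAB := (min_le_right _ _).trans (min_le_right _ _)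
      _ ≤ dInfty q.1 q.2 ^ p := hAB_le q (Finset.mem_filter.2
          ⟨Finset.mem_product.2 ⟨mem_toFinset.2 hqA, mem_toFinset.2 hqB⟩, hne⟩)
      _ ≤ injCost F p B M := pow_dInfty_le_injCost hq

end Matchings

theorem wdiv_eq_zero_iff_general (F : ℝ≥0∞ → ℝ≥0∞)
    (hpos : ∀ x : ℝ≥0∞, 0 < x → 0 < F x)
    (p : ℝ) (hp : 1 ≤ p) (A B : Multiset Pt) (hA : IsPD A) (hB : IsPD B) :
    WDiv F p A B = 0 ↔ A = B := by
  have hp0 : 0 < p := zero_lt_one.trans_le hp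
  rw [WDiv, ENNReal.rpow_eq_zero_iff_of_pos (one_div_pos.2 hp0)]
  constructor
  · contrapose!
    intro hAB
    obtain ⟨ε, hε, hle⟩ := exists_pos_le_injCost hp0 hpos hA hB hAB
    exact (hε.trans_le (le_iInf₂ hle)).ne'
  · rintro rfl
    exact nonpos_iff_eq_zero.1
      ((iInf₂_le _ (isInjMatching_map_diag A)).trans (injCost_map_diag hp0 hA).le)

/-- If `f x > 0` for all `x > 0`, then `D_p^f(A‖B) = 0` iff `A = B`. -/
theorem wdiv_eq_zero_iff (F : ℝ≥0∞ → ℝ≥0∞) (hc : Continuous F) (hd : SubDiag F) (ha : SubAdd F)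
    (hpos : ∀ x : ℝ≥0∞, 0 < x → 0 < F x)
    (p : ℝ) (hp : 1 ≤ p) (A B : Multiset Pt) (hA : IsPD A) (hB : IsPD B) :
    WDiv F p A B = 0 ↔ A = B :=
  wdiv_eq_zero_iff_general F hpos p hp A B hA hB
end

section
/- For any persistence diagrams A, B and 1 ≤ p < ∞, d_p(A,B) ≤ (D(A‖B)^p + D(B‖A)^p)^{1/p} ≤ 2^{1/p} d_p(A,B), where D is the (f,p)-Wasserstein divergence and d_p the p-Wasserstein distance. -/
open Multiset
open scoped ENNReal

attribute [local instance] Classical.propDecidable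

/-!
The lower bound is a Cantor–Schröder–Bernstein argument: from injections `γ : A → B ∪ Δ` and
`δ : B → A ∪ Δ` one builds a bijection of `A ∪ Δ` with `B ∪ Δ` whose every pair is a pair of
`γ` or a reversed pair of `δ`, so its cost is at most the sum of the two transport costs. Here the
diagrams are finite, so the bijection is built greedily: while some `b ∈ B` is missed by `γ`, use
the pair `(δ b, b)` and remove `b` and (if `δ b ∈ A`) the pair `(δ b, γ (δ b))`.

For the upper bound, restrict an optimal bijection to the off-diagonal points of `A`. A point of `B`
left unmatched was matched to a diagonal point, which is at least as far from it as its projection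
onto the diagonal, and `F` is sub-diagonal.
-/

lemma EReal.abs_sub_comm (x y : EReal) : (x - y).abs = (y - x).abs := by
  induction x <;> induction y
  all_goals simp [← EReal.coe_sub, EReal.abs_def, EReal.sub_bot, EReal.bot_sub, EReal.sub_top]
  exact _root_.abs_sub_comm _ _

lemma abs_sub_div_two_le_max (x y z : ℝ) : |y - z| / 2 ≤ max |x - z| |x - y| := by
  linarith [abs_sub_le y x z, abs_sub_comm y x, le_max_left |x - z| |x - y|,
    le_max_right |x - z| |x - y|]

lemma ENNReal.rpow_add_rpow_one_div_le_two_rpow_mul {x y z : ℝ≥0∞} {p : ℝ} (hp : 0 < p)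
    (hx : x ≤ z) (hy : y ≤ z) : (x ^ p + y ^ p) ^ (1 / p) ≤ 2 ^ (1 / p) * z := calc
  (x ^ p + y ^ p) ^ (1 / p) ≤ (z ^ p + z ^ p) ^ (1 / p) := by gcongr
  _ = 2 ^ (1 / p) * z := by
    rw [← two_mul, ENNReal.mul_rpow_of_nonneg _ _ (by positivity), one_div,
      ENNReal.rpow_rpow_inv hp.ne']

lemma Multiset.sum_le_sum_of_le {α : Type*} [AddCommMonoid α] [PartialOrder α]
    [CanonicallyOrderedAdd α] {s t : Multiset α} (h : s ≤ t) : s.sum ≤ t.sum := by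
  obtain ⟨u, rfl⟩ := Multiset.le_iff_exists_add.1 h
  rw [sum_add]
  exact le_self_add

lemma Multiset.cons_le_add_map_swap {α β : Type*} [DecidableEq α] [DecidableEq β]
    {M₁ M₁' M : Multiset (α × β)} {M₂ : Multiset (β × α)} {a : α} {b : β} (hq : (b, a) ∈ M₂)
    (h₁ : M₁' ≤ M₁) (hM : M ≤ M₁' + (M₂.erase (b, a)).map Prod.swap) :
    (a, b) ::ₘ M ≤ M₁ + M₂.map Prod.swap := by
  rw [← cons_erase hq, map_cons, add_cons]
  exact cons_le_cons _ (hM.trans (add_le_add_left h₁ _))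

lemma dInfty_comm (a b : Pt) : dInfty a b = dInfty b a := by
  simp only [dInfty, abs_sub_comm a.1, EReal.abs_sub_comm a.2, and_comm]

lemma dDiag_le_dInfty {a : Pt} (ha : isDiag a) (b : Pt) : dDiag b ≤ dInfty a b := by
  obtain ⟨x, _⟩ := a
  obtain ⟨z, y⟩ := b
  simp only [isDiag] at ha
  subst ha
  simp only [dInfty, dDiag, EReal.coe_ne_top, false_and, if_false]
  induction y with
  | bot => simp [EReal.sub_bot]
  | top => simp [EReal.sub_top]
  | coe y =>
    simp only [EReal.coe_ne_top, if_false, ← EReal.coe_sub, EReal.abs_def, ← ENNReal.ofReal_max]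
    rw [← ENNReal.ofReal_ofNat 2, ← ENNReal.ofReal_div_of_pos two_pos]
    exact ENNReal.ofReal_le_ofReal (abs_sub_div_two_le_max x y z)

lemma IsPD.not_isDiag {A : Multiset Pt} (hA : IsPD A) : ∀ a ∈ A, ¬ isDiag a :=
  fun a ha h => (hA a ha).ne h.symm

section Matchings

variable {A B : Multiset Pt} {M : Multiset (Pt × Pt)}

lemma IsBijMatching.swap (h : IsBijMatching A B M) : IsBijMatching B A (M.map Prod.swap) := by
  simpa [IsBijMatching, map_map] using h.symm

lemma IsBijMatching.cons_of_isDiag (h : IsBijMatching A B M) {a b : Pt} (ha : isDiag a)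
    (hb : ¬ isDiag b) : IsBijMatching A (b ::ₘ B) ((a, b) ::ₘ M) := by
  simpa [IsBijMatching, ha, hb] using h

lemma IsBijMatching.cons (h : IsBijMatching A B M) {a b : Pt} (ha : ¬ isDiag a)
    (hb : ¬ isDiag b) : IsBijMatching (a ::ₘ A) (b ::ₘ B) ((a, b) ::ₘ M) := by
  simpa [IsBijMatching, ha, hb] using h

lemma IsInjMatching.isBijMatching (h : IsInjMatching A B M) (hA : ∀ a ∈ A, ¬ isDiag a)
    (hM : unmatched B M = 0) : IsBijMatching A B M :=
  ⟨by rw [h.1]; exact filter_eq_self.mpr hA, le_antisymm h.2 (tsub_eq_zero_iff_le.mp hM)⟩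

lemma IsInjMatching.erase_fst (h : IsInjMatching A B M) {q : Pt × Pt} (hq : q ∈ M) :
    IsInjMatching (A.erase q.1) B (M.erase q) :=
  ⟨by rw [map_erase_of_mem _ _ hq, h.1],
    (filter_le_filter _ (map_le_map (erase_le _ _))).trans h.2⟩

lemma IsInjMatching.erase (h : IsInjMatching A B M) {q : Pt × Pt} (hq : q ∈ M)
    (hq2 : ¬ isDiag q.2) : IsInjMatching (A.erase q.1) (B.erase q.2) (M.erase q) := by
  refine ⟨(h.erase_fst hq).1, ?_⟩
  have hcons : q.2 ::ₘ ((M.erase q).map Prod.snd).filter (¬ isDiag ·) ≤ B := by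
    rw [← filter_cons_of_pos (p := (¬ isDiag ·)) _ hq2, ← map_cons, cons_erase hq]
    exact h.2
  simpa using erase_le_erase q.2 hcons

lemma IsInjMatching.erase_unmatched (h : IsInjMatching A B M) {b : Pt} (hb : b ∈ unmatched B M) :
    IsInjMatching A (B.erase b) M := by
  refine ⟨h.1, le_iff_count.2 fun x => ?_⟩
  have hx := le_iff_count.1 h.2 x
  have hbx := mem_sub.1 hb
  by_cases hxb : x = b
  · subst hxb
    rw [count_erase_self]
    omega
  · rw [count_erase_of_ne hxb]
    exact hx

theorem exists_isBijMatching_le_add_map_swap {M₁ M₂ : Multiset (Pt × Pt)}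
    (hA : ∀ a ∈ A, ¬ isDiag a) (hB : ∀ b ∈ B, ¬ isDiag b)
    (h₁ : IsInjMatching A B M₁) (h₂ : IsInjMatching B A M₂) :
    ∃ M, IsBijMatching A B M ∧ M ≤ M₁ + M₂.map Prod.swap := by
  induction B using Multiset.strongInductionOn generalizing A M₁ M₂ with
  | ih B ih =>
  by_cases hfull : unmatched B M₁ = 0
  · exact ⟨M₁, h₁.isBijMatching hA hfull, le_add_right le_rfl⟩
  obtain ⟨b, hb⟩ := exists_mem_of_ne_zero hfull
  have hbB : b ∈ B := mem_of_le (Multiset.sub_le_self _ _) hb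
  obtain ⟨⟨b, a⟩, hq, rfl⟩ := mem_map.1 (h₂.1 ▸ hbB : b ∈ M₂.map Prod.fst)
  have hB' : ∀ x ∈ B.erase b, ¬ isDiag x := fun x hx => hB x (mem_of_mem_erase hx)
  have hlt : B.erase b < B := erase_lt.2 hbB
  by_cases ha : isDiag a
  · obtain ⟨M, hM, hMle⟩ := ih _ hlt hA hB' (h₁.erase_unmatched hb) (h₂.erase_fst hq)
    exact ⟨(a, b) ::ₘ M, by simpa [cons_erase hbB] using hM.cons_of_isDiag ha (hB _ hbB),
      cons_le_add_map_swap hq le_rfl hMle⟩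
  · have haA : a ∈ A := mem_of_le h₂.2 (mem_filter.2 ⟨mem_map_of_mem Prod.snd hq, ha⟩)
    obtain ⟨r, hr, hra⟩ := mem_map.1 (h₁.1 ▸ haA : a ∈ M₁.map Prod.fst)
    have h₁' := (h₁.erase_unmatched hb).erase_fst hr
    rw [hra] at h₁'
    obtain ⟨M, hM, hMle⟩ := ih _ hlt (fun x hx => hA x (mem_of_mem_erase hx)) hB' h₁'
      (h₂.erase hq ha)
    exact ⟨(a, b) ::ₘ M, by simpa [cons_erase hbB, cons_erase haA] using hM.cons ha (hB _ hbB),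
      cons_le_add_map_swap hq (erase_le _ _) hMle⟩

end Matchings

noncomputable def matchCost (p : ℝ) (M : Multiset (Pt × Pt)) : ℝ≥0∞ :=
  (M.map fun q => dInfty q.1 q.2 ^ p).sum

section Costs

variable {A B : Multiset Pt} {M N : Multiset (Pt × Pt)} {F : ℝ≥0∞ → ℝ≥0∞} {p : ℝ}

lemma matchCost_add : matchCost p (M + N) = matchCost p M + matchCost p N := by
  simp [matchCost]

lemma matchCost_mono (h : M ≤ N) : matchCost p M ≤ matchCost p N :=
  sum_le_sum_of_le (map_le_map h)

lemma matchCost_map_swap : matchCost p (M.map Prod.swap) = matchCost p M := by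
  simp only [matchCost, map_map]
  exact congrArg _ (map_congr rfl fun q _ => by simp [dInfty_comm q.1])

lemma matchCost_le_injCost : matchCost p M ≤ injCost F p B M := le_self_add

lemma IsBijMatching.isInjMatching_filter (hM : IsBijMatching A B M) :
    IsInjMatching A B (M.filter (¬ isDiag ·.1)) :=
  ⟨by rw [← hM.1, filter_map]; rfl,
    hM.2 ▸ filter_le_filter _ (map_le_map (filter_le _ _))⟩

lemma IsBijMatching.unmatched_filter (hM : IsBijMatching A B M) :
    unmatched B (M.filter (¬ isDiag ·.1)) =
      ((M.filter (isDiag ·.1)).map Prod.snd).filter (¬ isDiag ·) := by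
  have hB : B = ((M.filter (isDiag ·.1)).map Prod.snd).filter (¬ isDiag ·) +
      ((M.filter (¬ isDiag ·.1)).map Prod.snd).filter (¬ isDiag ·) := by
    rw [← filter_add, ← map_add, filter_add_not, hM.2]
  rw [unmatched, hB, add_tsub_cancel_right]

lemma sum_unmatched_le_matchCost (hF : SubDiag F) (hp : 0 ≤ p) :
    ((((M.filter (isDiag ·.1)).map Prod.snd).filter (¬ isDiag ·)).map fun b => F (dDiag b) ^ p).sum
      ≤ matchCost p (M.filter (isDiag ·.1)) := calc
  _ ≤ (((M.filter (isDiag ·.1)).map Prod.snd).map fun b => F (dDiag b) ^ p).sum :=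
    sum_le_sum_of_le (map_le_map (filter_le _ _))
  _ ≤ matchCost p (M.filter (isDiag ·.1)) := by
    rw [map_map, matchCost]
    refine sum_map_le_sum_map _ _ fun q hq => ?_
    exact ENNReal.rpow_le_rpow ((hF _).trans (dDiag_le_dInfty (mem_filter.1 hq).2 q.2)) hp

lemma IsBijMatching.injCost_filter_le (hF : SubDiag F) (hp : 0 ≤ p) (hM : IsBijMatching A B M) :
    injCost F p B (M.filter (¬ isDiag ·.1)) ≤ matchCost p M := calc
  _ = matchCost p (M.filter (¬ isDiag ·.1)) +
      ((((M.filter (isDiag ·.1)).map Prod.snd).filter (¬ isDiag ·)).map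
        fun b => F (dDiag b) ^ p).sum := by
    rw [injCost, hM.unmatched_filter, matchCost]
  _ ≤ matchCost p (M.filter (¬ isDiag ·.1)) + matchCost p (M.filter (isDiag ·.1)) := by
    gcongr
    exact sum_unmatched_le_matchCost hF hp
  _ = matchCost p M := by rw [add_comm, ← matchCost_add, filter_add_not]

lemma iInf_injCost_le_iInf_matchCost (hF : SubDiag F) (hp : 0 ≤ p) :
    ⨅ (M) (_ : IsInjMatching A B M), injCost F p B M ≤
      ⨅ (M) (_ : IsBijMatching A B M), matchCost p M :=
  le_iInf₂ fun _ hM => (iInf₂_le _ hM.isInjMatching_filter).trans (hM.injCost_filter_le hF hp)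

lemma iInf_matchCost_le_iInf_injCost_add (hA : ∀ a ∈ A, ¬ isDiag a) (hB : ∀ b ∈ B, ¬ isDiag b) :
    ⨅ (M) (_ : IsBijMatching A B M), matchCost p M ≤
      (⨅ (M) (_ : IsInjMatching A B M), injCost F p B M) +
        ⨅ (M) (_ : IsInjMatching B A M), injCost F p A M :=
  ENNReal.le_iInf_add_iInf fun M₁ M₂ => ENNReal.le_iInf_add_iInf fun h₁ h₂ => by
    obtain ⟨M, hM, hle⟩ := exists_isBijMatching_le_add_map_swap hA hB h₁ h₂
    calc _ ≤ matchCost p M := iInf₂_le M hM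
      _ ≤ matchCost p (M₁ + M₂.map Prod.swap) := matchCost_mono hle
      _ = matchCost p M₁ + matchCost p M₂ := by rw [matchCost_add, matchCost_map_swap]
      _ ≤ _ := add_le_add matchCost_le_injCost matchCost_le_injCost

lemma iInf_matchCost_swap_le :
    ⨅ (M) (_ : IsBijMatching B A M), matchCost p M ≤
      ⨅ (M) (_ : IsBijMatching A B M), matchCost p M :=
  le_iInf₂ fun _ hM => (iInf₂_le _ hM.swap).trans matchCost_map_swap.le

end Costs

lemma Wass_comm (p : ℝ) (A B : Multiset Pt) : Wass p A B = Wass p B A :=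
  congrArg (· ^ (1 / p)) (le_antisymm iInf_matchCost_swap_le iInf_matchCost_swap_le)

lemma WDiv_le_Wass {F : ℝ≥0∞ → ℝ≥0∞} (hF : SubDiag F) {p : ℝ} (hp : 0 < p)
    (A B : Multiset Pt) : WDiv F p A B ≤ Wass p A B :=
  ENNReal.rpow_le_rpow (iInf_injCost_le_iInf_matchCost hF hp.le) (by positivity)

lemma WDiv_rpow (F : ℝ≥0∞ → ℝ≥0∞) {p : ℝ} (hp : p ≠ 0) (A B : Multiset Pt) :
    WDiv F p A B ^ p = ⨅ (M) (_ : IsInjMatching A B M), injCost F p B M := by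
  rw [WDiv, one_div, ENNReal.rpow_inv_rpow hp]

theorem wdiv_sandwich_general (F : ℝ≥0∞ → ℝ≥0∞) (hd : SubDiag F)
    (p : ℝ) (hp : 1 ≤ p) (A B : Multiset Pt) (hA : IsPD A) (hB : IsPD B) :
    Wass p A B ≤ (WDiv F p A B ^ p + WDiv F p B A ^ p) ^ (1 / p) ∧
      (WDiv F p A B ^ p + WDiv F p B A ^ p) ^ (1 / p) ≤ (2 : ℝ≥0∞) ^ (1 / p) * Wass p A B := by
  have hp₀ : 0 < p := zero_lt_one.trans_le hp
  refine ⟨?_, ENNReal.rpow_add_rpow_one_div_le_two_rpow_mul hp₀ (WDiv_le_Wass hd hp₀ A B)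
    (Wass_comm p A B ▸ WDiv_le_Wass hd hp₀ B A)⟩
  rw [WDiv_rpow F hp₀.ne', WDiv_rpow F hp₀.ne']
  exact ENNReal.rpow_le_rpow (iInf_matchCost_le_iInf_injCost_add hA.not_isDiag hB.not_isDiag) (by positivity)

/-- Sandwich inequality: `d_p(A,B) ≤ (D(A‖B)^p + D(B‖A)^p)^{1/p} ≤ 2^{1/p} d_p(A,B)`. -/
theorem wdiv_sandwich (F : ℝ≥0∞ → ℝ≥0∞) (hd : SubDiag F) (ha : SubAdd F)
    (p : ℝ) (hp : 1 ≤ p) (A B : Multiset Pt) (hA : IsPD A) (hB : IsPD B) :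
    Wass p A B ≤ (WDiv F p A B ^ p + WDiv F p B A ^ p) ^ (1 / p) ∧
      (WDiv F p A B ^ p + WDiv F p B A ^ p) ^ (1 / p) ≤ (2 : ℝ≥0∞) ^ (1 / p) * Wass p A B :=
  wdiv_sandwich_general F hd p hp A B hA hB
end

section
/- Let A be the persistence diagram with single off-diagonal point a = (1−x, 1+x) with 0 < x < 1, and B the diagram with single off-diagonal point b = (1−x+z, 1+x+z) with z > 2^{1/p} x. Then for f ≡ 0, D(A‖B) = D(B‖A) = x and d_p(A,B) = 2^{1/p} x; in particular d_p(A,B) = (D(A‖B)^p + D(B‖A)^p)^{1/p}, so the lower bound in the sandwich inequality is attained. -/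
open Multiset
open scoped ENNReal

attribute [local instance] Classical.propDecidable

/-!
Every point of a one-point diagram can be matched to its diagonal projection at cost half its
persistence, and nothing cheaper is available: a diagonal point is at least that far away, and
when `f ≡ 0` the only alternative for a divergence is the other diagram's point, which is
farther. So `D(A‖B) = D(B‖A) = x`. For `d_p` both points must be covered; matching `a` with
`b` costs `z^p > 2 x^p`, so the optimum sends both to the diagonal and costs `x^p + x^p`.
-/

lemma dInfty_coe (u₁ v₁ u₂ v₂ : ℝ) :
    dInfty (u₁, (v₁ : EReal)) (u₂, (v₂ : EReal)) =
      max (ENNReal.ofReal |u₁ - u₂|) (ENNReal.ofReal |v₁ - v₂|) := by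
  simp [dInfty, ← EReal.coe_sub, EReal.abs_def]

lemma dInfty_coe_comm (u₁ v₁ u₂ v₂ : ℝ) :
    dInfty (u₁, (v₁ : EReal)) (u₂, (v₂ : EReal)) =
      dInfty (u₂, (v₂ : EReal)) (u₁, (v₁ : EReal)) := by
  rw [dInfty_coe, dInfty_coe, abs_sub_comm u₁, abs_sub_comm v₁]

lemma dInfty_add_add (u v z : ℝ) :
    dInfty (u, (v : EReal)) (u + z, ((v + z : ℝ) : EReal)) = ENNReal.ofReal |z| := by
  rw [dInfty_coe, sub_add_cancel_left, sub_add_cancel_left, abs_neg, max_self]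

lemma dInfty_midpoint {u v : ℝ} (huv : u ≤ v) :
    dInfty (u, (v : EReal)) ((u + v) / 2, (((u + v) / 2 : ℝ) : EReal)) =
      ENNReal.ofReal ((v - u) / 2) := by
  rw [dInfty_coe, abs_of_nonpos (by linarith), abs_of_nonneg (by linarith)]
  ring_nf
  exact max_self _

lemma half_persistence_le_dInfty_of_isDiag {u v : ℝ} (huv : u ≤ v) {t : Pt} (ht : isDiag t) :
    ENNReal.ofReal ((v - u) / 2) ≤ dInfty (u, (v : EReal)) t := by
  obtain ⟨c, d⟩ := t
  obtain rfl : d = (c : EReal) := ht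
  rw [dInfty_coe]
  rcases le_total c ((u + v) / 2) with h | h
  · exact le_max_of_le_right (ENNReal.ofReal_le_ofReal (by rw [abs_of_nonneg] <;> linarith))
  · exact le_max_of_le_left (ENNReal.ofReal_le_ofReal (by rw [abs_of_nonpos] <;> linarith))

lemma half_persistence_le_dInfty_of_isDiag' {u v : ℝ} (huv : u ≤ v) {t : Pt} (ht : isDiag t) :
    ENNReal.ofReal ((v - u) / 2) ≤ dInfty t (u, (v : EReal)) := by
  obtain ⟨c, d⟩ := t
  obtain rfl : d = (c : EReal) := ht
  rw [dInfty_coe_comm]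
  exact half_persistence_le_dInfty_of_isDiag huv rfl

lemma not_isDiag_of_lt {u v : ℝ} (h : u < v) : ¬ isDiag (u, (v : EReal)) :=
  fun hd => h.ne' (EReal.coe_eq_coe_iff.mp hd)

lemma injCost_zero {p : ℝ} (hp : 0 < p) (B : Multiset Pt) (M : Multiset (Pt × Pt)) :
    injCost (fun _ => 0) p B M = (M.map fun q => dInfty q.1 q.2 ^ p).sum := by
  simp [injCost, ENNReal.zero_rpow_of_pos hp]

lemma exists_eq_singleton_of_map_fst_eq_singleton {M : Multiset (Pt × Pt)} {a : Pt}
    (h : M.map Prod.fst = {a}) : ∃ t, M = {(a, t)} := by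
  obtain ⟨q, rfl⟩ := Multiset.card_eq_one.mp (by simpa using congrArg Multiset.card h)
  simp only [Multiset.map_singleton, Multiset.singleton_inj] at h
  exact ⟨q.2, by rw [← h]⟩

lemma exists_mem_of_filter_map_eq_singleton {f : Pt × Pt → Pt} {M : Multiset (Pt × Pt)}
    {a : Pt} (h : (M.map f).filter (fun b => ¬ isDiag b) = {a}) : ∃ q ∈ M, f q = a := by
  have ha : a ∈ (M.map f).filter (fun b => ¬ isDiag b) := h ▸ Multiset.mem_singleton_self a
  exact Multiset.mem_map.mp (Multiset.mem_of_mem_filter ha)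

lemma eq_of_filter_map_eq_singleton {f : Pt × Pt → Pt} {M : Multiset (Pt × Pt)}
    {a : Pt} (h : (M.map f).filter (fun b => ¬ isDiag b) = {a}) {q : Pt × Pt} (hq : q ∈ M)
    (hd : ¬ isDiag (f q)) : f q = a := by
  have hmem : f q ∈ (M.map f).filter (fun b => ¬ isDiag b) :=
    Multiset.mem_filter.mpr ⟨Multiset.mem_map_of_mem f hq, hd⟩
  simpa [h] using hmem

lemma add_le_sum_map_of_ne {α : Type*} (g : α → ℝ≥0∞) {M : Multiset α} {q r : α}
    (hq : q ∈ M) (hr : r ∈ M) (hqr : q ≠ r) : g q + g r ≤ (M.map g).sum := by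
  have hr' : r ∈ M.erase q := (Multiset.mem_erase_of_ne hqr.symm).mpr hr
  rw [← Multiset.cons_erase hq, ← Multiset.cons_erase hr', Multiset.map_cons,
    Multiset.map_cons, Multiset.sum_cons, Multiset.sum_cons, ← add_assoc]
  exact le_self_add

lemma WDiv_zero_singleton {p : ℝ} (hp : 0 < p) {u v : ℝ} (huv : u ≤ v) (b : Pt)
    (hb : ENNReal.ofReal ((v - u) / 2) ≤ dInfty (u, (v : EReal)) b) :
    WDiv (fun _ => 0) p {(u, (v : EReal))} {b} = ENNReal.ofReal ((v - u) / 2) := by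
  set a : Pt := (u, (v : EReal))
  set c := ENNReal.ofReal ((v - u) / 2)
  suffices hinf : (⨅ (M) (_ : IsInjMatching {a} {b} M), injCost (fun _ => 0) p {b} M) = c ^ p by
    rw [WDiv, hinf, ← ENNReal.rpow_mul, mul_one_div_cancel hp.ne', ENNReal.rpow_one]
  apply le_antisymm
  · set t : Pt := ((u + v) / 2, (((u + v) / 2 : ℝ) : EReal))
    have hM : IsInjMatching {a} {b} {(a, t)} := by
      have ht : isDiag t := rfl
      simp [IsInjMatching, Multiset.filter_singleton, ht]
    refine (iInf₂_le _ hM).trans_eq ?_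
    simp [injCost_zero hp, a, t, dInfty_midpoint huv, c]
  · refine le_iInf₂ fun M hM => ?_
    obtain ⟨t, rfl⟩ := exists_eq_singleton_of_map_fst_eq_singleton hM.1
    have hct : c ≤ dInfty a t := by
      by_cases ht : isDiag t
      · exact half_persistence_le_dInfty_of_isDiag huv ht
      · have h2 := hM.2
        simp only [Multiset.map_singleton, Multiset.filter_singleton, if_pos ht,
          Multiset.singleton_le, Multiset.mem_singleton] at h2
        exact h2 ▸ hb
    rw [injCost_zero hp, Multiset.map_singleton, Multiset.sum_singleton]
    exact ENNReal.rpow_le_rpow hct hp.le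

lemma Wass_singleton {p : ℝ} (hp : 0 < p) {u₁ v₁ u₂ v₂ : ℝ} (h₁ : u₁ < v₁) (h₂ : u₂ < v₂)
    (hab : ENNReal.ofReal ((v₁ - u₁) / 2) ^ p + ENNReal.ofReal ((v₂ - u₂) / 2) ^ p ≤
      dInfty (u₁, (v₁ : EReal)) (u₂, (v₂ : EReal)) ^ p) :
    Wass p {(u₁, (v₁ : EReal))} {(u₂, (v₂ : EReal))} =
      (ENNReal.ofReal ((v₁ - u₁) / 2) ^ p + ENNReal.ofReal ((v₂ - u₂) / 2) ^ p) ^ (1 / p) := by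
  set a : Pt := (u₁, (v₁ : EReal))
  set b : Pt := (u₂, (v₂ : EReal))
  set c₁ := ENNReal.ofReal ((v₁ - u₁) / 2)
  set c₂ := ENNReal.ofReal ((v₂ - u₂) / 2)
  rw [Wass]
  congr 1
  apply le_antisymm
  · set t₁ : Pt := ((u₁ + v₁) / 2, (((u₁ + v₁) / 2 : ℝ) : EReal))
    set t₂ : Pt := ((u₂ + v₂) / 2, (((u₂ + v₂) / 2 : ℝ) : EReal))
    have hM : IsBijMatching {a} {b} {(a, t₁), (t₂, b)} := by
      have ht₁ : isDiag t₁ := rfl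
      have ht₂ : isDiag t₂ := rfl
      simp [IsBijMatching, Multiset.filter_singleton, ht₁, ht₂,
        not_isDiag_of_lt h₁, not_isDiag_of_lt h₂, a, b]
    refine (iInf₂_le _ hM).trans_eq ?_
    rw [Multiset.insert_eq_cons, Multiset.map_cons, Multiset.map_singleton, Multiset.sum_cons,
      Multiset.sum_singleton, dInfty_midpoint h₁.le, dInfty_coe_comm, dInfty_midpoint h₂.le]
  · refine le_iInf₂ fun M hM => ?_
    have hc₁ : c₁ ≤ dInfty a b := (ENNReal.rpow_le_rpow_iff hp).mp (le_self_add.trans hab)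
    have hc₂ : c₂ ≤ dInfty a b := (ENNReal.rpow_le_rpow_iff hp).mp (le_add_self.trans hab)
    obtain ⟨q, hq, hqa⟩ := exists_mem_of_filter_map_eq_singleton hM.1
    obtain ⟨r, hr, hrb⟩ := exists_mem_of_filter_map_eq_singleton hM.2
    by_cases hqr : q = r
    · -- `a` is matched to `b` itself
      have hqab : dInfty q.1 q.2 ^ p = dInfty a b ^ p := by rw [← hqa, ← hrb, hqr]
      calc c₁ ^ p + c₂ ^ p ≤ dInfty q.1 q.2 ^ p := hab.trans hqab.ge
        _ ≤ _ := Multiset.le_sum_of_mem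
          (Multiset.mem_map_of_mem (fun q : Pt × Pt => dInfty q.1 q.2 ^ p) hq)
    have hq₂ : c₁ ≤ dInfty q.1 q.2 := by
      rw [hqa]
      by_cases hd : isDiag q.2
      · exact half_persistence_le_dInfty_of_isDiag h₁.le hd
      · rwa [eq_of_filter_map_eq_singleton hM.2 hq hd]
    have hr₁ : c₂ ≤ dInfty r.1 r.2 := by
      rw [hrb]
      by_cases hd : isDiag r.1
      · exact half_persistence_le_dInfty_of_isDiag' (u := u₂) (v := v₂) h₂.le hd
      · rwa [eq_of_filter_map_eq_singleton hM.1 hr hd]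
    calc c₁ ^ p + c₂ ^ p ≤ dInfty q.1 q.2 ^ p + dInfty r.1 r.2 ^ p :=
          add_le_add (ENNReal.rpow_le_rpow hq₂ hp.le) (ENNReal.rpow_le_rpow hr₁ hp.le)
      _ ≤ _ := add_le_sum_map_of_ne (fun q : Pt × Pt => dInfty q.1 q.2 ^ p) hq hr hqr

lemma ENNReal.rpow_add_rpow_self_rpow_one_div {p : ℝ} (hp : 0 < p) (y : ℝ≥0∞) :
    (y ^ p + y ^ p) ^ (1 / p) = 2 ^ (1 / p) * y := by
  rw [← two_mul, ENNReal.mul_rpow_of_nonneg _ _ (by positivity), ← ENNReal.rpow_mul,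
    mul_one_div_cancel hp.ne', ENNReal.rpow_one]

theorem sandwich_lower_bound_tight_general (p x z : ℝ) (hp : 1 ≤ p)
    (hx0 : 0 < x) (hz : (2 : ℝ) ^ (1 / p) * x < z) :
    WDiv (fun _ => 0) p {((1 - x : ℝ), ((1 + x : ℝ) : EReal))}
        {((1 - x + z : ℝ), ((1 + x + z : ℝ) : EReal))} = ENNReal.ofReal x ∧
    WDiv (fun _ => 0) p {((1 - x + z : ℝ), ((1 + x + z : ℝ) : EReal))}
        {((1 - x : ℝ), ((1 + x : ℝ) : EReal))} = ENNReal.ofReal x ∧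
    Wass p {((1 - x : ℝ), ((1 + x : ℝ) : EReal))}
        {((1 - x + z : ℝ), ((1 + x + z : ℝ) : EReal))} =
      (2 : ℝ≥0∞) ^ (1 / p) * ENNReal.ofReal x ∧
    Wass p {((1 - x : ℝ), ((1 + x : ℝ) : EReal))}
        {((1 - x + z : ℝ), ((1 + x + z : ℝ) : EReal))} =
      (WDiv (fun _ => 0) p {((1 - x : ℝ), ((1 + x : ℝ) : EReal))}
          {((1 - x + z : ℝ), ((1 + x + z : ℝ) : EReal))} ^ p +
        WDiv (fun _ => 0) p {((1 - x + z : ℝ), ((1 + x + z : ℝ) : EReal))}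
          {((1 - x : ℝ), ((1 + x : ℝ) : EReal))} ^ p) ^ (1 / p) := by
  have hp0 : 0 < p := one_pos.trans_le hp
  have hxA : (1 + x - (1 - x)) / 2 = x := by ring
  have hxB : (1 + x + z - (1 - x + z)) / 2 = x := by ring
  have hdist : dInfty ((1 - x : ℝ), ((1 + x : ℝ) : EReal))
      ((1 - x + z : ℝ), ((1 + x + z : ℝ) : EReal)) = ENNReal.ofReal |z| := dInfty_add_add _ _ _
  have hsum : ENNReal.ofReal x ^ p + ENNReal.ofReal x ^ p ≤ ENNReal.ofReal |z| ^ p := by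
    rw [← ENNReal.rpow_inv_le_iff hp0, ← one_div, ENNReal.rpow_add_rpow_self_rpow_one_div hp0,
      show (2 : ℝ≥0∞) = ENNReal.ofReal 2 by simp, ENNReal.ofReal_rpow_of_pos two_pos,
      ← ENNReal.ofReal_mul (by positivity)]
    exact ENNReal.ofReal_le_ofReal (hz.le.trans (le_abs_self z))
  have hx_le : ENNReal.ofReal x ≤ ENNReal.ofReal |z| :=
    (ENNReal.rpow_le_rpow_iff hp0).mp (le_self_add.trans hsum)
  have hAB := WDiv_zero_singleton hp0 (u := 1 - x) (v := 1 + x) (by linarith) _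
    (by rwa [hxA, hdist])
  have hBA := WDiv_zero_singleton hp0 (u := 1 - x + z) (v := 1 + x + z) (by linarith) _
    (by rwa [hxB, dInfty_coe_comm, hdist])
  have hW := Wass_singleton hp0 (u₁ := 1 - x) (v₁ := 1 + x) (u₂ := 1 - x + z) (v₂ := 1 + x + z)
    (by linarith) (by linarith) (by rwa [hxA, hxB, hdist])
  rw [hxA] at hAB
  rw [hxB] at hBA
  rw [hxA, hxB, ENNReal.rpow_add_rpow_self_rpow_one_div hp0] at hW
  refine ⟨hAB, hBA, hW, ?_⟩
  rw [hW, hAB, hBA, ENNReal.rpow_add_rpow_self_rpow_one_div hp0]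

/-- For the one-point diagrams `A = {(1-x,1+x)}` and its diagonal translate
`B = {(1-x+z,1+x+z)}` with `z > 2^{1/p} x`, taking `f ≡ 0` we get
`D(A‖B) = D(B‖A) = x` and `d_p(A,B) = 2^{1/p} x`, so the lower bound of the
sandwich inequality is attained. -/
theorem sandwich_lower_bound_tight (p x z : ℝ) (hp : 1 ≤ p)
    (hx0 : 0 < x) (hx1 : x < 1) (hz : (2 : ℝ) ^ (1 / p) * x < z) :
    WDiv (fun _ => 0) p {((1 - x : ℝ), ((1 + x : ℝ) : EReal))}
        {((1 - x + z : ℝ), ((1 + x + z : ℝ) : EReal))} = ENNReal.ofReal x ∧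
    WDiv (fun _ => 0) p {((1 - x + z : ℝ), ((1 + x + z : ℝ) : EReal))}
        {((1 - x : ℝ), ((1 + x : ℝ) : EReal))} = ENNReal.ofReal x ∧
    Wass p {((1 - x : ℝ), ((1 + x : ℝ) : EReal))}
        {((1 - x + z : ℝ), ((1 + x + z : ℝ) : EReal))} =
      (2 : ℝ≥0∞) ^ (1 / p) * ENNReal.ofReal x ∧
    Wass p {((1 - x : ℝ), ((1 + x : ℝ) : EReal))}
        {((1 - x + z : ℝ), ((1 + x + z : ℝ) : EReal))} =
      (WDiv (fun _ => 0) p {((1 - x : ℝ), ((1 + x : ℝ) : EReal))}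
          {((1 - x + z : ℝ), ((1 + x + z : ℝ) : EReal))} ^ p +
        WDiv (fun _ => 0) p {((1 - x + z : ℝ), ((1 + x + z : ℝ) : EReal))}
          {((1 - x : ℝ), ((1 + x : ℝ) : EReal))} ^ p) ^ (1 / p) :=
  sandwich_lower_bound_tight_general p x z hp hx0 hz
end

section
/- Let π_F be the projection sending each persistence diagram A to the diagram obtained by deleting its points with infinite coordinates. Then π_F is a contraction with respect to the (f,p)-Wasserstein divergence: D(π_F(A)‖π_F(B)) ≤ D(A‖B) for all diagrams A, B and all 1 ≤ p ≤ ∞. -/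
open Multiset
open scoped ENNReal

attribute [local instance] Classical.propDecidable

noncomputable def injCostInf (f : ℝ≥0∞ → ℝ≥0∞) (B : Multiset Pt) (M : Multiset (Pt × Pt)) :
    ℝ≥0∞ :=
  max ((M.map fun q => dInfty q.1 q.2).sup) (((unmatched B M).map fun b => f (dDiag b)).sup)

def PreservesFinite (M : Multiset (Pt × Pt)) : Prop := ∀ q ∈ M, (q.1.2 = ⊤ ↔ q.2.2 = ⊤)

noncomputable def finitePart (M : Multiset (Pt × Pt)) : Multiset (Pt × Pt) :=
  M.filter fun q => q.1.2 ≠ ⊤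

lemma dInfty_eq_top_of_not_iff {a b : Pt} (h : ¬(a.2 = ⊤ ↔ b.2 = ⊤)) : dInfty a b = ⊤ := by
  have hboth : ¬(a.2 = ⊤ ∧ b.2 = ⊤) := fun ⟨h₁, h₂⟩ => h (by simp [h₁, h₂])
  have hsub : (a.2 - b.2).abs = ⊤ := by
    by_cases ha : a.2 = ⊤
    · have hb : b.2 ≠ ⊤ := fun hb => h (by simp [ha, hb])
      rw [ha, sub_eq_add_neg, EReal.top_add_of_ne_bot (by simp [hb])]
      rfl
    · have hb : b.2 = ⊤ := by tauto
      rw [hb, sub_eq_add_neg]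
      simp
  simp [dInfty, hboth, hsub]

lemma exists_dInfty_eq_top_of_not_preservesFinite {M : Multiset (Pt × Pt)}
    (h : ¬PreservesFinite M) : ∃ q ∈ M, dInfty q.1 q.2 = ⊤ := by
  simp only [PreservesFinite, not_forall, exists_prop] at h
  obtain ⟨q, hq, hmix⟩ := h
  exact ⟨q, hq, dInfty_eq_top_of_not_iff hmix⟩

section finitePart

variable {A B : Multiset Pt} {M : Multiset (Pt × Pt)}

lemma finitePart_le (M : Multiset (Pt × Pt)) : finitePart M ≤ M := Multiset.filter_le _ _

lemma map_fst_finitePart : (finitePart M).map Prod.fst = piF (M.map Prod.fst) := by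
  rw [piF, Multiset.filter_map]
  rfl

lemma offDiag_snd_finitePart (hM : PreservesFinite M) :
    ((finitePart M).map Prod.snd).filter (fun b => ¬isDiag b)
      = piF (((M.map Prod.snd).filter fun b => ¬isDiag b)) := by
  have htarget : finitePart M = M.filter ((fun b : Pt => b.2 ≠ ⊤) ∘ Prod.snd) :=
    Multiset.filter_congr fun q hq => not_congr (hM q hq)
  rw [htarget, ← Multiset.filter_map, piF, Multiset.filter_filter, Multiset.filter_filter]
  exact Multiset.filter_congr fun _ _ => and_comm

lemma IsInjMatching.finitePart (hM : IsInjMatching A B M) (hfin : PreservesFinite M) :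
    IsInjMatching (piF A) (piF B) (finitePart M) := by
  refine ⟨by rw [map_fst_finitePart, hM.1], ?_⟩
  rw [offDiag_snd_finitePart hfin, piF, piF]
  exact Multiset.filter_le_filter _ hM.2

lemma unmatched_finitePart_le (hM : PreservesFinite M) :
    unmatched (piF B) (finitePart M) ≤ unmatched B M := by
  rw [unmatched, unmatched, offDiag_snd_finitePart hM, piF, piF, ← Multiset.filter_sub]
  exact Multiset.filter_le _ _

end finitePart

section cost

variable (f : ℝ≥0∞ → ℝ≥0∞) {A B : Multiset Pt} {M : Multiset (Pt × Pt)}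

lemma injCost_finitePart_le (p : ℝ) (hM : PreservesFinite M) :
    injCost f p (piF B) (finitePart M) ≤ injCost f p B M :=
  add_le_add (Multiset.sum_le_sum_of_le (Multiset.map_le_map (finitePart_le M)))
    (Multiset.sum_le_sum_of_le (Multiset.map_le_map (unmatched_finitePart_le hM)))

lemma injCostInf_finitePart_le (hM : PreservesFinite M) :
    injCostInf f (piF B) (finitePart M) ≤ injCostInf f B M :=
  max_le_max (Multiset.sup_mono (Multiset.subset_of_le (Multiset.map_le_map (finitePart_le M))))
    (Multiset.sup_mono (Multiset.subset_of_le (Multiset.map_le_map (unmatched_finitePart_le hM))))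

lemma injCost_eq_top_of_not_preservesFinite {p : ℝ} (hp : 0 < p) (hM : ¬PreservesFinite M) :
    injCost f p B M = ⊤ := by
  obtain ⟨q, hq, htop⟩ := exists_dInfty_eq_top_of_not_preservesFinite hM
  have hmem : ⊤ ∈ M.map fun q => dInfty q.1 q.2 ^ p :=
    Multiset.mem_map.mpr ⟨q, hq, by rw [htop, ENNReal.top_rpow_of_pos hp]⟩
  rw [injCost, top_unique (Multiset.le_sum_of_mem hmem), top_add]

lemma injCostInf_eq_top_of_not_preservesFinite (hM : ¬PreservesFinite M) :
    injCostInf f B M = ⊤ := by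
  obtain ⟨q, hq, htop⟩ := exists_dInfty_eq_top_of_not_preservesFinite hM
  exact top_unique <| le_max_of_le_left <| htop ▸ Multiset.le_sup (Multiset.mem_map_of_mem _ hq)

lemma iInf_injCost_piF_le {p : ℝ} (hp : 0 < p) (hM : IsInjMatching A B M) :
    ⨅ (M' : Multiset (Pt × Pt)) (_ : IsInjMatching (piF A) (piF B) M'), injCost f p (piF B) M'
      ≤ injCost f p B M := by
  by_cases hfin : PreservesFinite M
  · exact iInf₂_le_of_le _ (hM.finitePart hfin) (injCost_finitePart_le f p hfin)
  · simp [injCost_eq_top_of_not_preservesFinite f hp hfin]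

lemma iInf_injCostInf_piF_le (hM : IsInjMatching A B M) :
    ⨅ (M' : Multiset (Pt × Pt)) (_ : IsInjMatching (piF A) (piF B) M'), injCostInf f (piF B) M'
      ≤ injCostInf f B M := by
  by_cases hfin : PreservesFinite M
  · exact iInf₂_le_of_le _ (hM.finitePart hfin) (injCostInf_finitePart_le f hfin)
  · simp [injCostInf_eq_top_of_not_preservesFinite f hfin]

end cost

theorem piF_contraction_wdiv_general (F : ℝ≥0∞ → ℝ≥0∞) (A B : Multiset Pt) :
    (∀ p : ℝ, 1 ≤ p → WDiv F p (piF A) (piF B) ≤ WDiv F p A B) ∧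
      WDivInf F (piF A) (piF B) ≤ WDivInf F A B := by
  refine ⟨fun p hp => ?_, le_iInf₂ fun M hM => iInf_injCostInf_piF_le F hM⟩
  have hp₀ : 0 < p := zero_lt_one.trans_le hp
  exact ENNReal.rpow_le_rpow (le_iInf₂ fun M hM => iInf_injCost_piF_le F hp₀ hM) (by positivity)

/-- The projection `π_F` deleting infinite points is a contraction for the
`(f,p)`-Wasserstein divergence, for all `1 ≤ p ≤ ∞`. -/
theorem piF_contraction_wdiv (F : ℝ≥0∞ → ℝ≥0∞) (hd : SubDiag F) (ha : SubAdd F)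
    (A B : Multiset Pt) (hA : IsPD A) (hB : IsPD B) :
    (∀ p : ℝ, 1 ≤ p → WDiv F p (piF A) (piF B) ≤ WDiv F p A B) ∧
      WDivInf F (piF A) (piF B) ≤ WDivInf F A B :=
  piF_contraction_wdiv_general F A B
end

section
/- Let f : [0,∞) → [0,∞) be sub-diagonal (f(x) ≤ x), sub-additive, continuous, strictly increasing with f(0)=0, and p-increasing, i.e., f((Σ xᵢ^p)^{1/p}) ≤ (Σ f(xᵢ)^p)^{1/p} for all finite nonnegative tuples. Then for every ε > 0 there exists δ > 0 such that for all persistence diagrams A, B with finite points only: if D(A‖B) < δ then d_p(A,B) < ε. -/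
open Multiset
open scoped ENNReal

attribute [local instance] Classical.propDecidable

/-!
Take an injection `γ` whose cost is below `δ^p`, and complete it to a bijection by sending each
unmatched point `b` of `B` to its diagonal projection; this costs `‖b - λ(b)‖_∞^p` instead of
`f(‖b - λ(b)‖_∞)^p`. By `p`-increasingness, `f` of the `p`-norm of these distances is at most the
unmatched part of the divergence cost, so choosing `δ ≤ f c` with `f` strictly increasing bounds
their `p`-norm by `c`; the matched part is bounded by `δ ≤ c`, and subadditivity of `t ↦ t^{1/p}`
gives `d_p < 2c`.
-/

lemma exists_pos_add_self_lt {ε : ℝ≥0∞} (hε : 0 < ε) : ∃ c, 0 < c ∧ c + c < ε := by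
  obtain ⟨η, hη0, hηε⟩ := exists_between hε
  exact ⟨η / 2, ENNReal.half_pos hη0.ne', by rwa [ENNReal.add_halves]⟩

lemma map_rpow_sum_le_of_pIncreasing {F : ℝ≥0∞ → ℝ≥0∞} {p : ℝ}
    (hpinc : ∀ (n : ℕ) (x : Fin n → ℝ≥0∞), (∀ i, x i ≠ ⊤) →
      F ((∑ i, x i ^ p) ^ (1 / p)) ≤ (∑ i, F (x i) ^ p) ^ (1 / p))
    {α : Type*} (s : Multiset α) (g : α → ℝ≥0∞) (hg : ∀ a ∈ s, g a ≠ ⊤) :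
    F ((s.map fun a => g a ^ p).sum ^ (1 / p)) ≤ (s.map fun a => F (g a) ^ p).sum ^ (1 / p) := by
  have h := hpinc s.toList.length (fun i => g s.toList[i.1])
    fun i => hg _ (mem_toList.1 (List.getElem_mem _))
  have hsum (φ : α → ℝ≥0∞) : ∑ i : Fin s.toList.length, φ s.toList[i.1] = (s.map φ).sum := by
    rw [Fin.sum_univ_fun_getElem, ← Multiset.sum_coe, ← Multiset.map_coe, coe_toList]
  rwa [hsum (fun a => g a ^ p), hsum (fun a => F (g a) ^ p)] at h

lemma exists_isInjMatching_of_wDiv_lt {f : ℝ≥0∞ → ℝ≥0∞} {p : ℝ} (hp : 0 < p)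
    {A B : Multiset Pt} {δ : ℝ≥0∞} (h : WDiv f p A B < δ) :
    ∃ M, IsInjMatching A B M ∧ injCost f p B M ^ (1 / p) < δ := by
  simp only [WDiv, one_div, ENNReal.rpow_inv_lt_iff hp, iInf_lt_iff, exists_prop] at h ⊢
  exact h

/-- The diagonal projection `λ`; junk when `b.2 = ⊤`, but then `dDiag b = ⊤`. -/
noncomputable def diagProj (b : Pt) : Pt := ((b.1 + b.2.toReal) / 2, ((b.1 + b.2.toReal) / 2 : ℝ))

lemma isDiag_diagProj (b : Pt) : isDiag (diagProj b) := rfl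

lemma dInfty_diagProj_le_dDiag (b : Pt) : dInfty (diagProj b) b ≤ dDiag b := by
  obtain ⟨x, y⟩ := b
  induction y using EReal.rec with
  | bot => simp [dDiag, ENNReal.top_div_of_ne_top]
  | top => simp [dDiag]
  | coe r =>
    have hx : (x + r) / 2 - x = (r - x) / 2 := by ring
    have hr : (x + r) / 2 - r = -((r - x) / 2) := by ring
    simp only [dInfty, dDiag, diagProj, EReal.toReal_coe, EReal.coe_ne_top, false_and,
      if_false, ← EReal.coe_sub, EReal.abs_def, hx, hr, abs_neg, max_self]
    rw [abs_div, abs_two, ENNReal.ofReal_div_of_pos two_pos, ENNReal.ofReal_ofNat]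

lemma dDiag_ne_top {b : Pt} (hbot : b.2 ≠ ⊥) (htop : b.2 ≠ ⊤) : dDiag b ≠ ⊤ := by
  obtain ⟨x, y⟩ := b
  lift y to ℝ using ⟨htop, hbot⟩ with r
  simp only [dDiag, EReal.coe_ne_top, if_false, ← EReal.coe_sub, EReal.abs_def]
  exact ENNReal.div_ne_top ENNReal.ofReal_ne_top two_ne_zero

noncomputable def completion (B : Multiset Pt) (M : Multiset (Pt × Pt)) : Multiset (Pt × Pt) :=
  M + (unmatched B M).map fun b => (diagProj b, b)

lemma unmatched_le (B : Multiset Pt) (M : Multiset (Pt × Pt)) : unmatched B M ≤ B :=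
  tsub_le_self

lemma IsPD.filter_not_isDiag_eq_self {A : Multiset Pt} (hA : IsPD A) :
    A.filter (fun a => ¬ isDiag a) = A :=
  filter_eq_self.2 fun a ha => (hA a ha).ne'

lemma IsInjMatching.isBijMatching_completion {A B : Multiset Pt} {M : Multiset (Pt × Pt)}
    (hA : IsPD A) (hB : IsPD B) (hM : IsInjMatching A B M) :
    IsBijMatching A B (completion B M) := by
  have hU : IsPD (unmatched B M) := fun b hb => hB b (mem_of_le (unmatched_le B M) hb)
  constructor
  · rw [completion, map_add, filter_add, hM.1, hA.filter_not_isDiag_eq_self, map_map,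
      filter_eq_nil.2 fun _ ha => ?_, add_zero]
    obtain ⟨b, -, rfl⟩ := mem_map.1 ha
    exact not_not_intro (isDiag_diagProj b)
  · rw [completion, map_add, filter_add, map_map]
    simp only [Function.comp_def, map_id']
    rw [hU.filter_not_isDiag_eq_self, unmatched, add_tsub_cancel_of_le hM.2]

lemma sum_completion_le {B : Multiset Pt} {M : Multiset (Pt × Pt)} {p : ℝ} (hp : 0 ≤ p) :
    ((completion B M).map fun q => dInfty q.1 q.2 ^ p).sum ≤
      (M.map fun q => dInfty q.1 q.2 ^ p).sum + ((unmatched B M).map fun b => dDiag b ^ p).sum := by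
  rw [completion, map_add, sum_add, map_map]
  gcongr
  exact sum_map_le_sum_map _ _ fun b _ =>
    ENNReal.rpow_le_rpow (dInfty_diagProj_le_dDiag b) hp

lemma wass_le_of_isInjMatching {A B : Multiset Pt} {M : Multiset (Pt × Pt)} {p : ℝ}
    (hA : IsPD A) (hB : IsPD B) (hM : IsInjMatching A B M) (hp : 0 ≤ p) :
    Wass p A B ≤ ((M.map fun q => dInfty q.1 q.2 ^ p).sum +
      ((unmatched B M).map fun b => dDiag b ^ p).sum) ^ (1 / p) :=
  ENNReal.rpow_le_rpow ((iInf₂_le _ (hM.isBijMatching_completion hA hB)).trans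
    (sum_completion_le hp)) (by positivity)

theorem stability_general (F : ℝ≥0∞ → ℝ≥0∞)
    (hm : StrictMono F) (h0 : F 0 = 0)
    (p : ℝ) (hp : 1 ≤ p)
    (hpinc : ∀ (n : ℕ) (x : Fin n → ℝ≥0∞), (∀ i, x i ≠ ⊤) →
      F ((∑ i, x i ^ p) ^ (1 / p)) ≤ (∑ i, F (x i) ^ p) ^ (1 / p)) :
    ∀ ε : ℝ≥0∞, 0 < ε → ∃ δ : ℝ≥0∞, 0 < δ ∧
      ∀ A B : Multiset Pt, IsPD A → IsPD B →
        (∀ a ∈ A, a.2 ≠ ⊤) → (∀ b ∈ B, b.2 ≠ ⊤) →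
        WDiv F p A B < δ → Wass p A B < ε := by
  intro ε hε
  have hp0 : 0 < p := one_pos.trans_le hp
  obtain ⟨c, hc0, hcε⟩ := exists_pos_add_self_lt hε
  refine ⟨min (F c) c, lt_min (h0 ▸ hm hc0) hc0, fun A B hA hB _ hBfin hlt => ?_⟩
  obtain ⟨M, hM, hcost⟩ := exists_isInjMatching_of_wDiv_lt hp0 hlt
  set S := (M.map fun q => dInfty q.1 q.2 ^ p).sum
  set U := unmatched B M
  have hS : S ^ (1 / p) < c := calc
    S ^ (1 / p) ≤ injCost F p B M ^ (1 / p) := ENNReal.rpow_le_rpow le_self_add (by positivity)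
    _ < min (F c) c := hcost
    _ ≤ c := min_le_right _ _
  have hU : ∀ b ∈ U, dDiag b ≠ ⊤ := fun b hb =>
    have hbB := mem_of_le (unmatched_le B M) hb
    dDiag_ne_top (hB b hbB).ne_bot (hBfin b hbB)
  have hT : (U.map fun b => dDiag b ^ p).sum ^ (1 / p) < c := hm.lt_iff_lt.1 <| calc
    F ((U.map fun b => dDiag b ^ p).sum ^ (1 / p))
        ≤ (U.map fun b => F (dDiag b) ^ p).sum ^ (1 / p) :=
      map_rpow_sum_le_of_pIncreasing hpinc U dDiag hU
    _ ≤ injCost F p B M ^ (1 / p) := ENNReal.rpow_le_rpow le_add_self (by positivity)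
    _ < min (F c) c := hcost
    _ ≤ F c := min_le_left _ _
  calc Wass p A B ≤ (S + (U.map fun b => dDiag b ^ p).sum) ^ (1 / p) :=
        wass_le_of_isInjMatching hA hB hM hp0.le
    _ ≤ S ^ (1 / p) + (U.map fun b => dDiag b ^ p).sum ^ (1 / p) :=
        ENNReal.rpow_add_le_add_rpow _ _ (by positivity) (div_le_one_of_le₀ hp hp0.le)
    _ < c + c := ENNReal.add_lt_add hS hT
    _ < ε := hcε

/-- Stability: if `f` is sub-diagonal, sub-additive, continuous, strictly
increasing with `f 0 = 0`, and `p`-increasing, then on diagrams with finite points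
the identity map from the divergence topology to the Wasserstein topology is
continuous: for every `ε > 0` there is `δ > 0` with `D(A‖B) < δ → d_p(A,B) < ε`. -/
theorem stability (F : ℝ≥0∞ → ℝ≥0∞) (hd : SubDiag F) (ha : SubAdd F)
    (hc : Continuous F) (hm : StrictMono F) (h0 : F 0 = 0)
    (p : ℝ) (hp : 1 ≤ p)
    (hpinc : ∀ (n : ℕ) (x : Fin n → ℝ≥0∞), (∀ i, x i ≠ ⊤) →
      F ((∑ i, x i ^ p) ^ (1 / p)) ≤ (∑ i, F (x i) ^ p) ^ (1 / p)) :
    ∀ ε : ℝ≥0∞, 0 < ε → ∃ δ : ℝ≥0∞, 0 < δ ∧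
      ∀ A B : Multiset Pt, IsPD A → IsPD B →
        (∀ a ∈ A, a.2 ≠ ⊤) → (∀ b ∈ B, b.2 ≠ ⊤) →
        WDiv F p A B < δ → Wass p A B < ε :=
  stability_general F hm h0 p hp hpinc
end
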